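/- arXiv:1501.05485 — 4 statements merged into one kernel-verified Lean document; each statement's English description precedes it below -/
import Mathlib

section
/- For every integer t with 0 ≤ t and t+1 ≤ n(1−a), the variance of Y_{t+1} satisfies Var(Y_{t+1}) ≤ (a/n²)·Σ_{j=t}^{2t} (1+1/n)^j − (a²/n²)·t·(1+1/n)^{2t}. -/
/-!
The Markov chain `(Y_t)` with `Y_0 = a = j/n ∈ Q_n = {1/n, …, 1}` and, conditionally on
the past, `Y_{t+1} = Y_t + 1/n` with probability `Y_t` and `Y_{t+1} = Y_t` with probability
`1 - Y_t`.  Since `Y_t ∈ {a + k/n : 0 ≤ k ≤ t}`, its law is described by the probabilities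
`ccrYProb n j t k = P(Y_t = (j+k)/n)`, given by the evident recursion.
-/

/-- `ccrYProb n j t k` is the probability that `Y_t = (j + k)/n`, where `Y_0 = j/n`. -/
noncomputable def ccrYProb (n j : ℕ) : ℕ → ℕ → ℝ
  | 0, k => if k = 0 then 1 else 0
  | t + 1, k =>
      ccrYProb n j t k * (1 - ((j : ℝ) + k) / n) +
        (if k = 0 then 0 else ccrYProb n j t (k - 1) * (((j : ℝ) + (k - 1 : ℕ)) / n))

/-- The expectation `E[Y_t]`. -/
noncomputable def ccrYExp (n j t : ℕ) : ℝ :=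
  ∑ k ∈ Finset.range (t + 1), (((j : ℝ) + k) / n) * ccrYProb n j t k

/-- The variance `Var(Y_t)`. -/
noncomputable def ccrYVar (n j t : ℕ) : ℝ :=
  (∑ k ∈ Finset.range (t + 1), (((j : ℝ) + k) / n) ^ 2 * ccrYProb n j t k) - (ccrYExp n j t) ^ 2


/-!
One step of the chain acts on test functions by
`E[f(Y_{t+1})] = E[f(Y_t)(1 - Y_t) + f(Y_t + 1/n) Y_t]`. With `q = 1 + 1/n` this gives
`E[Y_t] = a q^t` and `Var(Y_{t+1}) = (1 + 2/n) Var(Y_t) + E[Y_t](1 - E[Y_t])/n²`.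
The bound `B_t` on `Var(Y_{t+1})` obeys the same recursion with `q² ≥ 1 + 2/n` in place of
`1 + 2/n`, so, as `Var(Y_t) ≥ 0` (the weights stay probabilities while `j + t ≤ n + 1`),
induction from `Var(Y_1) = a(1 - a)/n² ≤ a/n² = B_0` proves the theorem.
-/

open Finset

lemma sum_Icc_pow_eq_pow_mul_geom_sum (q : ℝ) (t : ℕ) :
    ∑ i ∈ Icc t (2 * t), q ^ i = q ^ t * ∑ i ∈ range (t + 1), q ^ i := by
  rw [← Ico_add_one_right_eq_Icc, sum_Ico_eq_sum_range, mul_sum,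
    show 2 * t + 1 - t = t + 1 by omega]
  simp only [pow_add]

lemma sum_Icc_pow_succ (q : ℝ) (t : ℕ) :
    ∑ i ∈ Icc (t + 1) (2 * (t + 1)), q ^ i =
      q ^ 2 * ∑ i ∈ Icc t (2 * t), q ^ i + q ^ (t + 1) := by
  rw [sum_Icc_pow_eq_pow_mul_geom_sum, sum_Icc_pow_eq_pow_mul_geom_sum, geom_sum_succ]
  ring

section Chain

variable (n j : ℕ)

noncomputable def ccrYExpect (t : ℕ) (f : ℝ → ℝ) : ℝ :=
  ∑ k ∈ range (t + 1), f (((j : ℝ) + k) / n) * ccrYProb n j t k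

lemma ccrYProb_eq_zero_of_lt {t k : ℕ} (h : t < k) : ccrYProb n j t k = 0 := by
  induction t generalizing k with
  | zero => simp [ccrYProb, h.ne']
  | succ t ih => simp [ccrYProb, ih (show t < k by omega), ih (show t < k - 1 by omega)]

lemma ccrYProb_nonneg {t : ℕ} (ht : j + t ≤ n + 1) (k : ℕ) : 0 ≤ ccrYProb n j t k := by
  induction t generalizing k with
  | zero => simp only [ccrYProb]; split_ifs <;> norm_num
  | succ t ih =>
    have ih := ih (by omega)
    have h_stay : 0 ≤ ccrYProb n j t k * (1 - ((j : ℝ) + k) / n) := by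
      rcases le_or_gt k t with hk | hk
      · refine mul_nonneg (ih k) (sub_nonneg.2 (div_le_one_of_le₀ ?_ n.cast_nonneg))
        exact_mod_cast (show j + k ≤ n by omega)
      · simp [ccrYProb_eq_zero_of_lt n j hk]
    have h_move :
        0 ≤ if k = 0 then 0 else ccrYProb n j t (k - 1) * (((j : ℝ) + (k - 1 : ℕ)) / n) := by
      split_ifs
      exacts [le_rfl, mul_nonneg (ih _) (by positivity)]
    simp only [ccrYProb]
    positivity

lemma ccrYExpect_succ (t : ℕ) (f : ℝ → ℝ) :
    ccrYExpect n j (t + 1) f =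
      ccrYExpect n j t (fun y => f y * (1 - y) + f (y + 1 / n) * y) := by
  simp only [ccrYExpect, ccrYProb, mul_add, sum_add_distrib]
  rw [sum_range_succ _ (t + 1), sum_range_succ' _ (t + 1)]
  simp only [ccrYProb_eq_zero_of_lt n j (Nat.lt_succ_self t), ↓reduceIte, Nat.add_sub_cancel,
    Nat.add_one_ne_zero, zero_mul, mul_zero, add_zero, ← sum_add_distrib]
  refine sum_congr rfl fun k _ => ?_
  rw [Nat.cast_succ, ← add_assoc, add_div _ 1]
  ring

lemma ccrYExpect_add (t : ℕ) (f g : ℝ → ℝ) :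
    ccrYExpect n j t (fun y => f y + g y) = ccrYExpect n j t f + ccrYExpect n j t g := by
  simp only [ccrYExpect, add_mul, sum_add_distrib]

lemma ccrYExpect_const_mul (t : ℕ) (c : ℝ) (f : ℝ → ℝ) :
    ccrYExpect n j t (fun y => c * f y) = c * ccrYExpect n j t f := by
  simp only [ccrYExpect, mul_sum, mul_assoc]

lemma ccrYExpect_const (t : ℕ) (c : ℝ) : ccrYExpect n j t (fun _ => c) = c := by
  induction t with
  | zero => simp [ccrYExpect, ccrYProb]
  | succ t ih => simp only [ccrYExpect_succ, ← mul_add, sub_add_cancel, mul_one, ih]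

lemma ccrYExpect_nonneg {t : ℕ} (ht : j + t ≤ n + 1) {f : ℝ → ℝ} (hf : ∀ y, 0 ≤ f y) :
    0 ≤ ccrYExpect n j t f :=
  sum_nonneg fun k _ => mul_nonneg (hf _) (ccrYProb_nonneg n j ht k)

lemma ccrYExp_eq_ccrYExpect (t : ℕ) : ccrYExp n j t = ccrYExpect n j t (fun y => y) := rfl

lemma ccrYVar_eq_ccrYExpect (t : ℕ) :
    ccrYVar n j t = ccrYExpect n j t (· ^ 2) - ccrYExp n j t ^ 2 := rfl

lemma ccrYExp_eq (t : ℕ) : ccrYExp n j t = j / n * (1 + 1 / n) ^ t := by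
  induction t with
  | zero => simp [ccrYExp, ccrYProb]
  | succ t ih =>
    have h_step :
        (fun y : ℝ => y * (1 - y) + (y + 1 / n) * y) = fun y => (1 + 1 / (n : ℝ)) * y := by
      funext y; ring
    rw [ccrYExp_eq_ccrYExpect, ccrYExpect_succ, h_step, ccrYExpect_const_mul,
      ← ccrYExp_eq_ccrYExpect, ih]
    ring

lemma ccrYExpect_sq_succ (t : ℕ) :
    ccrYExpect n j (t + 1) (· ^ 2) =
      (1 + 2 / n) * ccrYExpect n j t (· ^ 2) + ccrYExp n j t / n ^ 2 := by
  have h_step : (fun y : ℝ => y ^ 2 * (1 - y) + (y + 1 / n) ^ 2 * y) =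
      fun y => (1 + 2 / (n : ℝ)) * y ^ 2 + 1 / (n : ℝ) ^ 2 * y := by
    funext y; ring
  rw [ccrYExpect_succ, h_step, ccrYExpect_add, ccrYExpect_const_mul, ccrYExpect_const_mul,
    ← ccrYExp_eq_ccrYExpect]
  ring

lemma ccrYVar_zero : ccrYVar n j 0 = 0 := by
  simp [ccrYVar, ccrYExp, ccrYProb]

lemma ccrYVar_succ (t : ℕ) :
    ccrYVar n j (t + 1) =
      (1 + 2 / n) * ccrYVar n j t + ccrYExp n j t * (1 - ccrYExp n j t) / n ^ 2 := by
  have h_exp : ccrYExp n j (t + 1) = (1 + 1 / n) * ccrYExp n j t := by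
    rw [ccrYExp_eq, ccrYExp_eq]; ring
  rw [ccrYVar_eq_ccrYExpect, ccrYVar_eq_ccrYExpect, ccrYExpect_sq_succ, h_exp]
  ring

lemma ccrYVar_nonneg {t : ℕ} (ht : j + t ≤ n + 1) : 0 ≤ ccrYVar n j t := by
  set m := ccrYExp n j t
  have h_centered : (fun y : ℝ => (y - m) ^ 2) = fun y => y ^ 2 + (-2 * m * y + m ^ 2) := by
    funext y; ring
  have h := ccrYExpect_nonneg n j ht (f := fun y => (y - m) ^ 2) fun y => sq_nonneg _
  rw [h_centered, ccrYExpect_add, ccrYExpect_add, ccrYExpect_const_mul, ccrYExpect_const,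
    ← ccrYExp_eq_ccrYExpect] at h
  rw [ccrYVar_eq_ccrYExpect]
  linarith

-- bounds `Var(Y_{t+1})`, not `Var(Y_t)`
noncomputable def ccrYVarBound (t : ℕ) : ℝ :=
  ((j : ℝ) / n) / (n : ℝ) ^ 2 * ∑ i ∈ Finset.Icc t (2 * t), (1 + 1 / (n : ℝ)) ^ i -
    ((j : ℝ) / n) ^ 2 / (n : ℝ) ^ 2 * t * (1 + 1 / (n : ℝ)) ^ (2 * t)

lemma ccrYVarBound_zero : ccrYVarBound n j 0 = j / n / n ^ 2 := by
  simp [ccrYVarBound]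

lemma ccrYVarBound_succ (t : ℕ) :
    ccrYVarBound n j (t + 1) =
      (1 + 1 / n) ^ 2 * ccrYVarBound n j t +
        ccrYExp n j (t + 1) * (1 - ccrYExp n j (t + 1)) / n ^ 2 := by
  rw [ccrYVarBound, ccrYVarBound, sum_Icc_pow_succ, ccrYExp_eq]
  push_cast
  ring

end Chain

theorem ccrY_variance_bound_general (n j : ℕ)
    (t : ℕ) (ht : t + 1 ≤ n - j) :
    ccrYVar n j (t + 1) ≤
      ((j : ℝ) / n) / (n : ℝ) ^ 2 * ∑ i ∈ Finset.Icc t (2 * t), (1 + 1 / (n : ℝ)) ^ i -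
        ((j : ℝ) / n) ^ 2 / (n : ℝ) ^ 2 * t * (1 + 1 / (n : ℝ)) ^ (2 * t) := by
  change ccrYVar n j (t + 1) ≤ ccrYVarBound n j t
  induction t with
  | zero =>
    rw [ccrYVar_succ, ccrYVar_zero, ccrYVarBound_zero, ccrYExp_eq]
    calc _ = j / n / n ^ 2 - (j / n / n : ℝ) ^ 2 := by ring
      _ ≤ _ := sub_le_self _ (sq_nonneg _)
  | succ t ih =>
    have h_coeff : 1 + 2 / (n : ℝ) ≤ (1 + 1 / n) ^ 2 := by
      rw [show (1 + 1 / (n : ℝ)) ^ 2 = 1 + 2 / n + (1 / n) ^ 2 by ring]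
      exact le_add_of_nonneg_right (sq_nonneg _)
    rw [ccrYVar_succ, ccrYVarBound_succ]
    gcongr ?_ + _
    exact mul_le_mul h_coeff (ih (by omega)) (ccrYVar_nonneg n j (by omega)) (sq_nonneg _)

/-- For every integer `t ≥ 0` with `t + 1 ≤ n(1-a)`, where `a = j/n`,
`Var(Y_{t+1}) ≤ (a/n²)·Σ_{i=t}^{2t} (1+1/n)^i − (a²/n²)·t·(1+1/n)^{2t}`. -/
theorem ccrY_variance_bound (n j : ℕ) (hn : 1 ≤ n) (hj1 : 1 ≤ j) (hjn : j ≤ n)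
    (t : ℕ) (ht : t + 1 ≤ n - j) :
    ccrYVar n j (t + 1) ≤
      ((j : ℝ) / n) / (n : ℝ) ^ 2 * ∑ i ∈ Finset.Icc t (2 * t), (1 + 1 / (n : ℝ)) ^ i -
        ((j : ℝ) / n) ^ 2 / (n : ℝ) ^ 2 * t * (1 + 1 / (n : ℝ)) ^ (2 * t) :=
  ccrY_variance_bound_general n j t ht
end

section
/- Let f : Q_n → ℂ and, for each i ∈ Q_n, let X_i be a Q_n-valued random variable with P(X_i = j) = b_{ij} for all j ∈ Q_n. Then for every i ∈ Q_n with i ≠ 1, |E[f(X_{i+1/n})] − E[f(X_i)]| ≤ (22/n)·max_{j ∈ Q_n} |f(j)|. -/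
/-- The function `G_b : [0,1] → [0,1]`, with breakpoint `u₀(b) = 1 - (1-b)e^b`:
`G_b(u) = e^{1-b}·u` for `u ≤ u₀(b)` and
`G_b(u) = e^{e^{-b}(1-u)} - (1-u)·e^{1-b}` for `u > u₀(b)`.  For `a ∈ (0,1]` it is a
strictly increasing continuous bijection of `[0,1]` onto itself. -/
noncomputable def Gfun (b u : ℝ) : ℝ :=
  if u ≤ 1 - (1 - b) * Real.exp b then Real.exp (1 - b) * u
  else Real.exp (Real.exp (-b) * (1 - u)) - (1 - u) * Real.exp (1 - b)

/-- The inverse `G_a⁻¹` of `G_a`. -/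
noncomputable def Ginv (a : ℝ) : ℝ → ℝ := Function.invFun (Gfun a)

/-- The doubly stochastic `n × n` matrix `B(n) = [b_{ij}]`, rows and columns indexed by
`Q_n = {1/n, …, 1}` via `i ↦ (i+1)/n`: `b_{ij}` is the probability that `G_a(V)` lies in
`(j - 1/n, j]` when `a` is uniform on `(i - 1/n, i)` and `V` is uniform on `[0,1]`,
independently, i.e. `b_{ij} = n·∫_{i-1/n}^{i} (G_a⁻¹(j) - G_a⁻¹(j - 1/n)) da`. -/
noncomputable def Bmat (n : ℕ) : Matrix (Fin n) (Fin n) ℝ := fun i j =>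
  n * ∫ a in ((i.val : ℝ) / n)..(((i.val : ℝ) + 1) / n),
    (Ginv a (((j.val : ℝ) + 1) / n) - Ginv a ((j.val : ℝ) / n))

/-!
Consecutive rows of `B(n)` average `g_j(a) = G_a⁻¹((j+1)/n) - G_a⁻¹(j/n)` over adjacent
intervals of length `1/n`, so `Σ_j |b_{i+1,j} - b_{ij}|` is at most the average over `a` of the
variation of `D = G_{a+1/n}⁻¹ - G_a⁻¹` along the grid `j/n`.  The inverse is explicit:
`G_a⁻¹(w) = e^{a-1} w` below `p(a) = G_a(u₀(a)) = φ(1-a)`, where `φ(t) = e^t - e t`, while above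
`p(a)` the quantity `e^{-a}(1 - G_a⁻¹(w)) = φ⁻¹(w)` does not depend on `a`.  Hence, for `a ≤ a'`,
`D = E - F` with `E`, `F` nondecreasing and `F(1) - F(0) = e^a (a' - a)`.  Since `D(0) = D(1) = 0`,
the variation of `D` is at most `2 (F(1) - F(0)) ≤ 2e/n`, and `2e ≤ 22`.
-/

open Real Set MeasureTheory

noncomputable def Gphi (t : ℝ) : ℝ := exp t - exp 1 * t

noncomputable def Gbreak (b : ℝ) : ℝ := 1 - (1 - b) * exp b

lemma Gphi_zero : Gphi 0 = 1 := by simp [Gphi]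

lemma Gphi_one : Gphi 1 = 0 := by simp [Gphi]

lemma Gphi_strictAntiOn : StrictAntiOn Gphi (Iic 1) := by
  refine strictAntiOn_of_deriv_neg (convex_Iic 1) (by unfold Gphi; fun_prop) fun t ht => ?_
  rw [interior_Iic] at ht
  have hderiv : HasDerivAt Gphi (exp t - exp 1 * 1) t :=
    (hasDerivAt_exp t).sub ((hasDerivAt_id t).const_mul (exp 1))
  rw [hderiv.deriv, mul_one, sub_neg]
  exact exp_lt_exp.mpr ht

lemma Gphi_mem_Icc {t : ℝ} (ht : t ∈ Icc (0 : ℝ) 1) : Gphi t ∈ Icc (0 : ℝ) 1 := by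
  have hanti := Gphi_strictAntiOn.antitoneOn
  constructor
  · simpa [Gphi_one] using hanti ht.2 (mem_Iic.2 le_rfl) ht.2
  · simpa [Gphi_zero] using hanti (zero_le_one : (0 : ℝ) ≤ 1) ht.2 ht.1

lemma Gphi_one_sub_le_Gphi_one_sub {a a' : ℝ} (ha : 0 ≤ a) (haa' : a ≤ a') :
    Gphi (1 - a) ≤ Gphi (1 - a') :=
  Gphi_strictAntiOn.antitoneOn (show 1 - a' ≤ 1 by linarith) (show 1 - a ≤ 1 by linarith)
    (by linarith)

lemma Gbreak_nonneg (a : ℝ) : 0 ≤ Gbreak a := by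
  have h : (1 - a) * exp a ≤ exp (-a) * exp a :=
    mul_le_mul_of_nonneg_right (by linarith [add_one_le_exp (-a)]) (exp_pos a).le
  rw [← exp_add, neg_add_cancel, exp_zero] at h
  rw [Gbreak]; linarith

lemma Gbreak_le_one {a : ℝ} (ha : a ≤ 1) : Gbreak a ≤ 1 := by
  have : 0 ≤ (1 - a) * exp a := mul_nonneg (by linarith) (exp_pos a).le
  rw [Gbreak]; linarith

lemma exp_neg_mul_one_sub_Gbreak (a : ℝ) : exp (-a) * (1 - Gbreak a) = 1 - a := by
  rw [Gbreak, sub_sub_cancel, mul_left_comm, ← exp_add, neg_add_cancel, exp_zero, mul_one]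

lemma exp_one_sub_mul_Gbreak (a : ℝ) : exp (1 - a) * Gbreak a = Gphi (1 - a) := by
  have h : exp (1 - a) * exp a = exp 1 := by rw [← exp_add, sub_add_cancel]
  rw [Gbreak, Gphi]; linear_combination (a - 1) * h

lemma exp_neg_mul_one_sub_le {a u : ℝ} (hu : Gbreak a ≤ u) : exp (-a) * (1 - u) ≤ 1 - a := by
  rw [← exp_neg_mul_one_sub_Gbreak a]
  exact mul_le_mul_of_nonneg_left (by linarith) (exp_pos _).le

lemma Gfun_of_le {a u : ℝ} (hu : u ≤ Gbreak a) : Gfun a u = exp (1 - a) * u := if_pos hu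

lemma Gfun_eq_Gphi {a u : ℝ} (hu : Gbreak a ≤ u) : Gfun a u = Gphi (exp (-a) * (1 - u)) := by
  rcases hu.eq_or_lt with rfl | hlt
  · rw [Gfun_of_le le_rfl, exp_one_sub_mul_Gbreak, exp_neg_mul_one_sub_Gbreak]
  · have h : exp 1 * exp (-a) = exp (1 - a) := by rw [← exp_add, sub_eq_add_neg]
    have hupper : Gfun a u = exp (exp (-a) * (1 - u)) - (1 - u) * exp (1 - a) :=
      if_neg (not_le.mpr hlt)
    rw [hupper, Gphi]
    linear_combination (1 - u) * h

lemma Gfun_strictMono {a : ℝ} (ha : 0 ≤ a) : StrictMono (Gfun a) := by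
  refine StrictMonoOn.Iic_union_Ici (a := Gbreak a) (fun u hu w hw huw => ?_)
    (fun u hu w hw huw => ?_)
  · rw [Gfun_of_le hu, Gfun_of_le hw]
    exact mul_lt_mul_of_pos_left huw (exp_pos _)
  · have hu1 : exp (-a) * (1 - u) ≤ 1 := (exp_neg_mul_one_sub_le hu).trans (by linarith)
    have hw1 : exp (-a) * (1 - w) ≤ 1 := (exp_neg_mul_one_sub_le hw).trans (by linarith)
    rw [Gfun_eq_Gphi hu, Gfun_eq_Gphi hw]
    exact Gphi_strictAntiOn hw1 hu1 (mul_lt_mul_of_pos_left (by linarith) (exp_pos _))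

lemma Gfun_continuous (a : ℝ) : Continuous (Gfun a) := by
  refine Continuous.if_le (by fun_prop) (by fun_prop) continuous_id continuous_const
    fun u hu => ?_
  rw [← Gfun_of_le hu.le, Gfun_eq_Gphi hu.ge, Gphi]
  have h : exp 1 * exp (-a) = exp (1 - a) := by rw [← exp_add, sub_eq_add_neg]
  linear_combination (u - 1) * h

lemma Gfun_zero (a : ℝ) : Gfun a 0 = 0 := by rw [Gfun_of_le (Gbreak_nonneg a), mul_zero]

lemma Gfun_one {a : ℝ} (ha : a ≤ 1) : Gfun a 1 = 1 := by
  rw [Gfun_eq_Gphi (Gbreak_le_one ha), sub_self, mul_zero, Gphi_zero]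

lemma Ginv_Gfun {a : ℝ} (ha : 0 ≤ a) (u : ℝ) : Ginv a (Gfun a u) = u :=
  Function.leftInverse_invFun (Gfun_strictMono ha).injective u

lemma Gfun_Ginv {a v : ℝ} (ha : a ≤ 1) (hv : v ∈ Icc (0 : ℝ) 1) : Gfun a (Ginv a v) = v := by
  refine Function.invFun_eq ?_
  have hivt := intermediate_value_Icc zero_le_one (Gfun_continuous a).continuousOn
  rw [Gfun_zero, Gfun_one ha] at hivt
  obtain ⟨u, -, hu⟩ := hivt hv
  exact ⟨u, hu⟩

lemma Ginv_zero {a : ℝ} (ha : 0 ≤ a) : Ginv a 0 = 0 := by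
  simpa only [Gfun_zero] using Ginv_Gfun ha 0

lemma Ginv_one {a : ℝ} (ha0 : 0 ≤ a) (ha1 : a ≤ 1) : Ginv a 1 = 1 := by
  simpa only [Gfun_one ha1] using Ginv_Gfun ha0 1

lemma Ginv_monotoneOn {a : ℝ} (ha0 : 0 ≤ a) (ha1 : a ≤ 1) : MonotoneOn (Ginv a) (Icc 0 1) :=
  fun v hv w hw hvw => (Gfun_strictMono ha0).le_iff_le.mp <| by
    rwa [Gfun_Ginv ha1 hv, Gfun_Ginv ha1 hw]

lemma Ginv_eq_of_le {a v : ℝ} (ha : 0 ≤ a) (hv : v ≤ Gphi (1 - a)) :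
    Ginv a v = exp (a - 1) * v := by
  have hinv : exp (a - 1) * exp (1 - a) = 1 := by rw [← exp_add, sub_add_sub_cancel', sub_self,
    exp_zero]
  have hbreak : exp (a - 1) * v ≤ Gbreak a := by
    calc exp (a - 1) * v ≤ exp (a - 1) * Gphi (1 - a) :=
          mul_le_mul_of_nonneg_left hv (exp_pos _).le
      _ = Gbreak a := by rw [← exp_one_sub_mul_Gbreak, ← mul_assoc, hinv, one_mul]
  conv_rhs => rw [← Ginv_Gfun ha (exp (a - 1) * v), Gfun_of_le hbreak, ← mul_assoc,
    mul_comm (exp (1 - a)), hinv, one_mul]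

lemma Ginv_Gphi {a a' : ℝ} (ha : 0 ≤ a) (haa' : a ≤ a') :
    Ginv a (Gphi (1 - a')) = 1 - exp a * (1 - a') := by
  have hbreak : Gbreak a ≤ 1 - exp a * (1 - a') := by
    rw [Gbreak, mul_comm]
    exact sub_le_sub_left (mul_le_mul_of_nonneg_left (by linarith) (exp_pos a).le) 1
  have ht : exp (-a) * (1 - (1 - exp a * (1 - a'))) = 1 - a' := by
    rw [sub_sub_cancel, ← mul_assoc, ← exp_add, neg_add_cancel, exp_zero, one_mul]
  rw [← Ginv_Gfun ha (1 - exp a * (1 - a')), Gfun_eq_Gphi hbreak, ht]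

lemma Gbreak_le_Ginv {a v : ℝ} (ha0 : 0 ≤ a) (ha1 : a ≤ 1) (hv : Gphi (1 - a) ≤ v)
    (hv1 : v ≤ 1) : Gbreak a ≤ Ginv a v := by
  have hv0 : 0 ≤ v := (Gphi_mem_Icc ⟨by linarith, by linarith⟩).1.trans hv
  rw [← (Gfun_strictMono ha0).le_iff_le, Gfun_Ginv ha1 ⟨hv0, hv1⟩, Gfun_of_le le_rfl,
    exp_one_sub_mul_Gbreak]
  exact hv

lemma Gphi_exp_neg_mul_one_sub_Ginv {a v : ℝ} (ha0 : 0 ≤ a) (ha1 : a ≤ 1)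
    (hv : Gphi (1 - a) ≤ v) (hv1 : v ≤ 1) :
    Gphi (exp (-a) * (1 - Ginv a v)) = v := by
  have hv0 : 0 ≤ v := (Gphi_mem_Icc ⟨by linarith, by linarith⟩).1.trans hv
  rw [← Gfun_eq_Gphi (Gbreak_le_Ginv ha0 ha1 hv hv1), Gfun_Ginv ha1 ⟨hv0, hv1⟩]

lemma one_sub_Ginv_eq {a a' v : ℝ} (ha : 0 ≤ a) (haa' : a ≤ a') (ha' : a' ≤ 1)
    (hv : Gphi (1 - a') ≤ v) (hv1 : v ≤ 1) :
    1 - Ginv a v = exp (a - a') * (1 - Ginv a' v) := by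
  have hva : Gphi (1 - a) ≤ v := (Gphi_one_sub_le_Gphi_one_sub ha haa').trans hv
  have ht : exp (-a) * (1 - Ginv a v) = exp (-a') * (1 - Ginv a' v) := by
    refine Gphi_strictAntiOn.injOn ?_ ?_ ?_
    · exact (exp_neg_mul_one_sub_le (Gbreak_le_Ginv ha (by linarith) hva hv1)).trans
        (by linarith)
    · exact (exp_neg_mul_one_sub_le (Gbreak_le_Ginv (by linarith) ha' hv hv1)).trans
        (by linarith)
    · rw [Gphi_exp_neg_mul_one_sub_Ginv ha (by linarith) hva hv1,
        Gphi_exp_neg_mul_one_sub_Ginv (by linarith) ha' hv hv1]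
  have hexp : exp a * exp (-a') = exp (a - a') := by rw [← exp_add, sub_eq_add_neg]
  have hone : exp a * exp (-a) = 1 := by rw [← exp_add, add_neg_cancel, exp_zero]
  linear_combination exp a * ht + (Ginv a v - 1) * hone + (1 - Ginv a' v) * hexp

lemma abs_sub_le_of_eqOn_sub {α : Type*} [Preorder α] {s : Set α} {D E F : α → ℝ}
    (hE : MonotoneOn E s) (hF : MonotoneOn F s) (hD : EqOn D (E - F) s) {x y : α} (hx : x ∈ s)
    (hy : y ∈ s) (hxy : x ≤ y) : |D y - D x| ≤ (E y - E x) + (F y - F x) := by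
  have hEi := hE hx hy hxy
  have hFi := hF hx hy hxy
  rw [hD hx, hD hy, Pi.sub_apply, Pi.sub_apply, abs_le]
  constructor <;> linarith

lemma sum_range_abs_sub_le_of_eqOn_sub {α : Type*} [Preorder α] {s : Set α} {D E F : α → ℝ}
    (hE : MonotoneOn E s) (hF : MonotoneOn F s) (hD : EqOn D (E - F) s) {v : ℕ → α}
    (hv : Monotone v) {n : ℕ} (hvs : ∀ j ≤ n, v j ∈ s) :
    ∑ j ∈ Finset.range n, |D (v (j + 1)) - D (v j)| ≤
      (E (v n) - E (v 0)) + (F (v n) - F (v 0)) := by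
  calc ∑ j ∈ Finset.range n, |D (v (j + 1)) - D (v j)|
      ≤ ∑ j ∈ Finset.range n, ((E (v (j + 1)) - E (v j)) + (F (v (j + 1)) - F (v j))) := by
        refine Finset.sum_le_sum fun j hj => ?_
        have hj := Finset.mem_range.mp hj
        exact abs_sub_le_of_eqOn_sub hE hF hD (hvs j hj.le) (hvs (j + 1) hj) (hv j.le_succ)
    _ = (E (v n) - E (v 0)) + (F (v n) - F (v 0)) := by
        rw [Finset.sum_add_distrib, Finset.sum_range_sub (fun j => E (v j)),
          Finset.sum_range_sub (fun j => F (v j))]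

/-- With `p = φ(1-a) ≤ q = φ(1-a')`, the difference is linear on `[0,p]`, equals
`e^{a'-1} w - G_a⁻¹(w)` on `[p,q]`, and is a nonnegative multiple of `G_{a'}⁻¹(w) - 1` on
`[q,1]`; so the only decreasing part is `G_a⁻¹` clamped to `[p,q]`. -/
lemma exists_monotoneOn_sub_monotoneOn_Ginv_sub_Ginv {a a' : ℝ} (ha : 0 ≤ a) (haa' : a ≤ a')
    (ha' : a' ≤ 1) :
    ∃ E F : ℝ → ℝ, MonotoneOn E (Iic 1) ∧ MonotoneOn F (Iic 1) ∧
      EqOn (fun w => Ginv a' w - Ginv a w) (E - F) (Iic 1) ∧ F 1 - F 0 = exp a * (a' - a) := by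
  set p := Gphi (1 - a)
  set q := Gphi (1 - a')
  have hp : p ∈ Icc (0 : ℝ) 1 := Gphi_mem_Icc ⟨by linarith, by linarith⟩
  have hq : q ∈ Icc (0 : ℝ) 1 := Gphi_mem_Icc ⟨by linarith, by linarith⟩
  have hpq : p ≤ q := Gphi_one_sub_le_Gphi_one_sub ha haa'
  have hclamp : ∀ w, min (max w p) q ∈ Icc (0 : ℝ) 1 := fun w =>
    ⟨le_min (hp.1.trans (le_max_right w p)) hq.1, (min_le_right _ _).trans hq.2⟩
  have hslope : 0 ≤ exp (a' - 1) - exp (a - 1) := sub_nonneg.mpr (exp_le_exp.mpr (by linarith))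
  have hdamp : 0 ≤ 1 - exp (a - a') := sub_nonneg.mpr (exp_le_one_iff.mpr (by linarith))
  have hGp : Ginv a p = exp (a - 1) * p := Ginv_eq_of_le ha le_rfl
  have hGq : Ginv a' q = exp (a' - 1) * q := Ginv_eq_of_le (ha.trans haa') le_rfl
  refine ⟨fun w => (exp (a' - 1) - exp (a - 1)) * min w p + exp (a' - 1) * (min (max w p) q - p)
      + (1 - exp (a - a')) * (Ginv a' (max w q) - Ginv a' q),
    fun w => Ginv a (min (max w p) q) - Ginv a p, ?_, ?_, ?_, ?_⟩
  · intro x hx y hy hxy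
    have hmax : Ginv a' (max x q) ≤ Ginv a' (max y q) :=
      Ginv_monotoneOn (ha.trans haa') ha' ⟨hq.1.trans (le_max_right _ _), max_le hx hq.2⟩
        ⟨hq.1.trans (le_max_right _ _), max_le hy hq.2⟩ (max_le_max hxy le_rfl)
    dsimp only
    gcongr
  · intro x _ y _ hxy
    exact sub_le_sub_right (Ginv_monotoneOn ha (by linarith) (hclamp x) (hclamp y)
      (min_le_min (max_le_max hxy le_rfl) le_rfl)) _
  · intro w hw
    simp only [Pi.sub_apply]
    rcases le_total w p with hwp | hpw
    · rw [min_eq_left hwp, max_eq_right hwp, min_eq_left hpq, max_eq_right (hwp.trans hpq),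
        Ginv_eq_of_le (ha.trans haa') (hwp.trans hpq), Ginv_eq_of_le ha hwp]
      ring
    rcases le_total w q with hwq | hqw
    · rw [min_eq_right hpw, max_eq_left hpw, min_eq_left hwq, max_eq_right hwq,
        Ginv_eq_of_le (ha.trans haa') hwq, hGp]
      ring
    · have hw' := one_sub_Ginv_eq ha haa' ha' hqw hw
      have hq' := one_sub_Ginv_eq (v := q) ha haa' ha' le_rfl hq.2
      rw [min_eq_right hpw, max_eq_left hpw, min_eq_right hqw, max_eq_left hqw, hGp]
      linear_combination hGq - hq' + hw'
  · simp only
    rw [max_eq_left hp.2, min_eq_right hq.2, max_eq_right hp.1, min_eq_left hpq,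
      Ginv_Gphi ha haa', Ginv_Gphi ha le_rfl]
    ring

lemma abs_Ginv_sub_Ginv_le {a a' w : ℝ} (ha : 0 ≤ a) (haa' : a ≤ a') (ha' : a' ≤ 1)
    (hw : w ∈ Icc (0 : ℝ) 1) : |Ginv a' w - Ginv a w| ≤ 2 * exp a * (a' - a) := by
  obtain ⟨E, F, hE, hF, hD, hFvar⟩ := exists_monotoneOn_sub_monotoneOn_Ginv_sub_Ginv ha haa' ha'
  have h0 : (0 : ℝ) ∈ Iic 1 := mem_Iic.2 zero_le_one
  have h1 : (1 : ℝ) ∈ Iic 1 := mem_Iic.2 le_rfl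
  have hw' : w ∈ Iic 1 := hw.2
  have hinc := abs_sub_le_of_eqOn_sub hE hF hD h0 hw' hw.1
  have hD0 := hD h0
  have hD1 := hD h1
  simp only [Pi.sub_apply, Ginv_zero ha, Ginv_zero (ha.trans haa'), Ginv_one ha (by linarith),
    Ginv_one (ha.trans haa') ha', sub_self, sub_zero] at hinc hD0 hD1
  have hEw := hE hw' h1 hw.2
  have hFw := hF hw' h1 hw.2
  linarith

lemma sum_abs_Ginv_sub_Ginv_le {a a' : ℝ} (ha : 0 ≤ a) (haa' : a ≤ a') (ha' : a' ≤ 1)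
    {v : ℕ → ℝ} (hv : Monotone v) {n : ℕ} (hv0 : v 0 = 0) (hvn : v n = 1) :
    ∑ j ∈ Finset.range n,
      |(Ginv a' (v (j + 1)) - Ginv a (v (j + 1))) - (Ginv a' (v j) - Ginv a (v j))| ≤
      2 * exp a * (a' - a) := by
  obtain ⟨E, F, hE, hF, hD, hFvar⟩ := exists_monotoneOn_sub_monotoneOn_Ginv_sub_Ginv ha haa' ha'
  have hsum := sum_range_abs_sub_le_of_eqOn_sub hE hF hD hv fun j hj => (hv hj).trans hvn.le
  have hD0 := hD (mem_Iic.2 zero_le_one)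
  have hD1 := hD (mem_Iic.2 le_rfl)
  simp only [Pi.sub_apply, Ginv_zero ha, Ginv_zero (ha.trans haa'), Ginv_one ha (by linarith),
    Ginv_one (ha.trans haa') ha', sub_self] at hD0 hD1
  rw [hv0, hvn] at hsum
  linarith

lemma continuousOn_Ginv {w : ℝ} (hw : w ∈ Icc (0 : ℝ) 1) :
    ContinuousOn (fun a => Ginv a w) (Icc 0 1) := by
  have hlip : ∀ x ∈ Icc (0 : ℝ) 1, ∀ y ∈ Icc (0 : ℝ) 1, x ≤ y →
      |Ginv y w - Ginv x w| ≤ 2 * exp 1 * (y - x) := fun x hx y hy hxy =>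
    (abs_Ginv_sub_Ginv_le hx.1 hxy hy.2 hw).trans <| by gcongr; exact hx.2
  refine (LipschitzOnWith.of_dist_le_mul (K := ⟨2 * exp 1, by positivity⟩)
    fun x hx y hy => ?_).continuousOn
  rw [dist_comm, Real.dist_eq, Real.dist_eq]
  change _ ≤ 2 * exp 1 * _
  rcases le_total x y with hxy | hyx
  · rw [abs_of_nonpos (by linarith : x - y ≤ 0), neg_sub]
    exact hlip x hx y hy hxy
  · rw [abs_sub_comm, abs_of_nonneg (by linarith : 0 ≤ x - y)]
    exact hlip y hy x hx hyx

lemma sum_abs_integral_add_sub_integral_le {ι : Type*} (s : Finset ι) {g : ι → ℝ → ℝ}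
    {x y h C : ℝ} (hxy : x ≤ y) (hg : ∀ j ∈ s, IntervalIntegrable (g j) volume x y)
    (hgh : ∀ j ∈ s, IntervalIntegrable (g j) volume (x + h) (y + h))
    (hC : ∀ a ∈ Icc x y, ∑ j ∈ s, |g j (a + h) - g j a| ≤ C) :
    ∑ j ∈ s, |(∫ a in (x + h)..(y + h), g j a) - ∫ a in x..y, g j a| ≤ C * (y - x) := by
  have hshift : ∀ j ∈ s, IntervalIntegrable (fun a => g j (a + h)) volume x y := fun j hj => by
    simpa only [add_sub_cancel_right] using (hgh j hj).comp_add_right h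
  have hdiff : ∀ j ∈ s, IntervalIntegrable (fun a => |g j (a + h) - g j a|) volume x y :=
    fun j hj => ((hshift j hj).sub (hg j hj)).abs
  calc ∑ j ∈ s, |(∫ a in (x + h)..(y + h), g j a) - ∫ a in x..y, g j a|
      = ∑ j ∈ s, |∫ a in x..y, (g j (a + h) - g j a)| := Finset.sum_congr rfl fun j hj => by
        rw [intervalIntegral.integral_sub (hshift j hj) (hg j hj),
          intervalIntegral.integral_comp_add_right]
    _ ≤ ∑ j ∈ s, ∫ a in x..y, |g j (a + h) - g j a| :=
        Finset.sum_le_sum fun j _ => intervalIntegral.abs_integral_le_integral_abs hxy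
    _ = ∫ a in x..y, ∑ j ∈ s, |g j (a + h) - g j a| :=
        (intervalIntegral.integral_finsetSum hdiff).symm
    _ ≤ ∫ _ in x..y, C := by
        refine intervalIntegral.integral_mono_on hxy ?_ intervalIntegrable_const hC
        simpa only [Finset.sum_fn] using IntervalIntegrable.sum s hdiff
    _ = C * (y - x) := by rw [intervalIntegral.integral_const, smul_eq_mul, mul_comm]

noncomputable def Gcell (n : ℕ) (j : Fin n) (a : ℝ) : ℝ :=
  Ginv a (((j : ℝ) + 1) / n) - Ginv a ((j : ℝ) / n)

lemma Bmat_eq_integral_Gcell (n : ℕ) (i j : Fin n) :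
    Bmat n i j = n * ∫ a in ((i : ℝ) / n)..(((i : ℝ) + 1) / n), Gcell n j a := rfl

lemma continuousOn_Gcell {n : ℕ} (j : Fin n) : ContinuousOn (Gcell n j) (Icc 0 1) := by
  have hN : (0 : ℝ) < n := by exact_mod_cast j.pos
  have hj : ((j : ℝ) + 1) / n ∈ Icc (0 : ℝ) 1 :=
    ⟨by positivity, (div_le_one hN).mpr (by exact_mod_cast j.2)⟩
  have hj' : (j : ℝ) / n ∈ Icc (0 : ℝ) 1 :=
    ⟨by positivity, (div_le_one hN).mpr (by exact_mod_cast j.2.le)⟩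
  exact (continuousOn_Ginv hj).sub (continuousOn_Ginv hj')

lemma sum_abs_Gcell_sub_le (n : ℕ) {a a' : ℝ} (ha : 0 ≤ a) (haa' : a ≤ a') (ha' : a' ≤ 1) :
    ∑ j, |Gcell n j a' - Gcell n j a| ≤ 2 * exp a * (a' - a) := by
  obtain rfl | hn := n.eq_zero_or_pos
  · simp only [Finset.univ_eq_empty, Finset.sum_empty]
    exact mul_nonneg (by positivity) (by linarith)
  have hN : (0 : ℝ) < n := by exact_mod_cast hn
  calc ∑ j, |Gcell n j a' - Gcell n j a|
      = ∑ k ∈ Finset.range n, |(Ginv a' (((k + 1 : ℕ) : ℝ) / n) - Ginv a (((k + 1 : ℕ) : ℝ) / n))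
          - (Ginv a' ((k : ℝ) / n) - Ginv a ((k : ℝ) / n))| := by
        rw [← Fin.sum_univ_eq_sum_range]
        refine Finset.sum_congr rfl fun j _ => congrArg abs ?_
        rw [Gcell, Gcell]
        push_cast
        ring
    _ ≤ 2 * exp a * (a' - a) :=
        sum_abs_Ginv_sub_Ginv_le ha haa' ha' (v := fun k : ℕ => (k : ℝ) / n)
          (fun k l hkl => by dsimp only; gcongr) (by simp) (div_self hN.ne')

lemma sum_abs_Bmat_succ_sub_le {n : ℕ} (i : Fin n) (hi : (i : ℕ) + 1 < n) :
    ∑ j, |Bmat n ⟨(i : ℕ) + 1, hi⟩ j - Bmat n i j| ≤ 2 * exp 1 / n := by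
  have hN : (0 : ℝ) < n := by exact_mod_cast i.pos
  set x : ℝ := (i : ℝ) / n
  set h : ℝ := 1 / n
  have hh : 0 < h := by positivity
  have hx0 : 0 ≤ x := by positivity
  have hend : x + h + h ≤ 1 := by
    have hi' : (i : ℝ) + 2 ≤ n := by exact_mod_cast hi
    calc x + h + h = ((i : ℝ) + 2) / n := by ring
      _ ≤ 1 := (div_le_one hN).mpr hi'
  have hrow : ∀ j, Bmat n ⟨(i : ℕ) + 1, hi⟩ j - Bmat n i j =
      n * ((∫ a in (x + h)..(x + h + h), Gcell n j a) - ∫ a in x..(x + h), Gcell n j a) :=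
    fun j => by
      rw [Bmat_eq_integral_Gcell, Bmat_eq_integral_Gcell, mul_sub]
      congr 4 <;> simp only [x, h, Nat.cast_add, Nat.cast_one, add_div]
  have hvar : ∀ a ∈ Icc x (x + h), ∑ j, |Gcell n j (a + h) - Gcell n j a| ≤ 2 * exp 1 * h :=
    fun a ha => calc
      _ ≤ 2 * exp a * (a + h - a) :=
        sum_abs_Gcell_sub_le n (hx0.trans ha.1) (by linarith) (by linarith [ha.2])
      _ ≤ 2 * exp 1 * h := by
        rw [add_sub_cancel_left]
        gcongr
        linarith [ha.2]
  have hint : ∀ j ∈ Finset.univ, IntervalIntegrable (Gcell n j) volume x (x + h) := fun j _ =>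
    ((continuousOn_Gcell j).mono (Icc_subset_Icc hx0 (by linarith))).intervalIntegrable_of_Icc
      (by linarith)
  have hint' : ∀ j ∈ Finset.univ, IntervalIntegrable (Gcell n j) volume (x + h) (x + h + h) :=
    fun j _ => ((continuousOn_Gcell j).mono (Icc_subset_Icc (by linarith) hend)
      ).intervalIntegrable_of_Icc (by linarith)
  calc ∑ j, |Bmat n ⟨(i : ℕ) + 1, hi⟩ j - Bmat n i j|
      = n * ∑ j, |(∫ a in (x + h)..(x + h + h), Gcell n j a) - ∫ a in x..(x + h), Gcell n j a| := by
        simp only [hrow, abs_mul, abs_of_pos hN, Finset.mul_sum]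
    _ ≤ n * (2 * exp 1 * h * (x + h - x)) := by
        gcongr
        exact sum_abs_integral_add_sub_integral_le _ (by linarith) hint hint' hvar
    _ = 2 * exp 1 / n := by
        simp only [h]
        field_simp
        ring

lemma norm_sum_ofReal_mul_le {𝕜 ι : Type*} [RCLike 𝕜] [Fintype ι] (c : ι → ℝ) (f : ι → 𝕜) :
    ‖∑ j, (c j : 𝕜) * f j‖ ≤ (∑ j, |c j|) * ⨆ j, ‖f j‖ :=
  calc ‖∑ j, (c j : 𝕜) * f j‖ ≤ ∑ j, ‖(c j : 𝕜) * f j‖ := norm_sum_le _ _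
    _ ≤ ∑ j, |c j| * ⨆ j, ‖f j‖ := Finset.sum_le_sum fun j _ => by
        rw [norm_mul, RCLike.norm_ofReal]
        exact mul_le_mul_of_nonneg_left
          (le_ciSup (f := fun j => ‖f j‖) (Finite.bddAbove_range _) j) (abs_nonneg _)
    _ = (∑ j, |c j|) * ⨆ j, ‖f j‖ := (Finset.sum_mul _ _ _).symm

theorem Bmat_row_expectation_close_general (n : ℕ) (f : Fin n → ℂ)
    (i : Fin n) (hi : (i : ℕ) + 1 < n) :
    ‖(∑ j : Fin n, (Bmat n ⟨(i : ℕ) + 1, hi⟩ j : ℂ) * f j) -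
        ∑ j : Fin n, (Bmat n i j : ℂ) * f j‖ ≤
      (22 / (n : ℝ)) * ⨆ j : Fin n, ‖f j‖ := by
  have hrows : (∑ j : Fin n, (Bmat n ⟨(i : ℕ) + 1, hi⟩ j : ℂ) * f j) -
      ∑ j : Fin n, (Bmat n i j : ℂ) * f j =
      ∑ j, ((Bmat n ⟨(i : ℕ) + 1, hi⟩ j - Bmat n i j : ℝ) : ℂ) * f j := by
    rw [← Finset.sum_sub_distrib]
    push_cast
    simp only [sub_mul]
  have hM : 0 ≤ ⨆ j, ‖f j‖ := Real.iSup_nonneg fun j => norm_nonneg (f j)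
  rw [hrows]
  calc _ ≤ (∑ j, |Bmat n ⟨(i : ℕ) + 1, hi⟩ j - Bmat n i j|) * ⨆ j, ‖f j‖ :=
        norm_sum_ofReal_mul_le _ f
    _ ≤ 2 * exp 1 / n * ⨆ j, ‖f j‖ := by gcongr; exact sum_abs_Bmat_succ_sub_le i hi
    _ ≤ 22 / n * ⨆ j, ‖f j‖ := by gcongr; linarith [exp_one_lt_d9]

/-- Let `f : Q_n → ℂ` and, for `i ∈ Q_n`, let `X_i` be a `Q_n`-valued random variable with
`P(X_i = j) = b_{ij}`, so that `E[f(X_i)] = Σ_j b_{ij}·f(j)`.  Then for every `i ≠ 1` in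
`Q_n` (i.e., `i + 1/n ∈ Q_n`), `|E[f(X_{i+1/n})] − E[f(X_i)]| ≤ (22/n)·max_j |f(j)|`. -/
theorem Bmat_row_expectation_close (n : ℕ) (hn : 2 ≤ n) (f : Fin n → ℂ)
    (i : Fin n) (hi : (i : ℕ) + 1 < n) :
    ‖(∑ j : Fin n, (Bmat n ⟨(i : ℕ) + 1, hi⟩ j : ℂ) * f j) -
        ∑ j : Fin n, (Bmat n i j : ℂ) * f j‖ ≤
      (22 / (n : ℝ)) * ⨆ j : Fin n, ‖f j‖ :=
  Bmat_row_expectation_close_general n f i hi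
end

section
/- There exist constants c₁, c₂, c₃ > 0, independent of n, such that for every integer n ≥ 2, every eigenvalue λ ∈ ℂ of B(n) with |λ| > 0.08, and every corresponding eigenvector φ : Q_n → ℂ with ‖φ‖₂ = 1: (i) ‖φ‖₁ ≥ c₁·n^{4/9}; (ii) ‖φ‖_∞ ≤ c₂·n^{−4/9}; and (iii) |φ(i + 1/n) − φ(i)| ≤ c₃·n^{−13/9} for every i ∈ Q_n with i ≠ 1. Here ‖φ‖₁ = Σ_{i ∈ Q_n}|φ(i)|, ‖φ‖₂ = (Σ_{i ∈ Q_n}|φ(i)|²)^{1/2}, ‖φ‖_∞ = max_{i ∈ Q_n}|φ(i)|. -/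
/-!
On `[0,1]` the inverse of `G_a` is explicit: `G_a⁻¹ y = max (e^{a-1} y) (1 - e^a T(y))`, where
`T` inverts `S t = e^t - e t` on `[0,1]`. As `t ↦ √(S t) + t/2` is decreasing,
`T y - T y' ≤ 2 (√y' - √y)`, so `b_{ij} ≤ 6 (√j - √(j - 1/n))` and every row of `B(n)` has
squared `ℓ²`-norm `O(log n / n) = O(n^{-8/9})`. By Cauchy–Schwarz `|λ| |φ i| ≤ ‖b_{i·}‖₂`, which
gives (ii), and (i) follows from `1 = ‖φ‖₂² ≤ ‖φ‖_∞ ‖φ‖₁`.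

For (iii), `λ (φ(i + 1/n) - φ i) = ∑ⱼ (b_{i+1/n, j} - b_{ij}) φ j`, and consecutive rows are
`O(1/n)` apart in `ℓ¹`: for `a ≤ a'` the total variation of `y ↦ G_{a'}⁻¹ y - G_a⁻¹ y` is
`O(a' - a)`, because on each of the three intervals cut out by the branch points of `G_a⁻¹` and
`G_{a'}⁻¹` it is dominated by that of one explicit increasing function.
-/

open Real Set

lemma exp_sub_exp_le_mul_sub (x y : ℝ) : exp y - exp x ≤ exp y * (y - x) := by
  have h : 1 + (x - y) ≤ exp (x - y) := by linarith [add_one_le_exp (x - y)]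
  have hx : exp x = exp y * exp (x - y) := by rw [← exp_add]; ring_nf
  nlinarith [exp_pos y]

lemma sq_sqrt_sub_sqrt_le {x y : ℝ} (hx : 0 ≤ x) (hxy : x ≤ y) :
    (√y - √x) ^ 2 ≤ (y - x) ^ 2 / y := by
  rcases (hx.trans hxy).eq_or_lt with rfl | hy
  · simp [le_antisymm hxy hx]
  rw [le_div_iff₀ hy]
  have hsx := sq_sqrt hx
  have hsy := sq_sqrt hy.le
  have hle := sqrt_le_sqrt hxy
  have h : (√y - √x) * √y ≤ y - x := by nlinarith [sqrt_nonneg x]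
  nlinarith [mul_le_mul h h (by nlinarith [sqrt_nonneg x]) (by linarith)]

lemma harmonic_le_rpow (n : ℕ) : (harmonic n : ℝ) ≤ 10 * (n : ℝ) ^ (1 / 9 : ℝ) := by
  rcases n.eq_zero_or_pos with rfl | hn
  · simp
  have hlog := log_le_rpow_div n.cast_nonneg (show (0 : ℝ) < 1 / 9 by norm_num)
  have hone := one_le_rpow (show (1 : ℝ) ≤ n by exact_mod_cast hn)
    (show (0 : ℝ) ≤ 1 / 9 by norm_num)
  linarith [harmonic_le_one_add_log n]

lemma natCast_div_mem_Icc {j n : ℕ} (h : j ≤ n) : (j : ℝ) / n ∈ Icc (0 : ℝ) 1 :=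
  ⟨by positivity, div_le_one_of_le₀ (by exact_mod_cast h) n.cast_nonneg⟩

lemma sum_abs_integral_le {ι : Type*} (s : Finset ι) {g : ι → ℝ → ℝ} (hg : ∀ j, Continuous (g j))
    {c d K : ℝ} (hcd : c ≤ d) (hK : ∀ a ∈ Icc c d, ∑ j ∈ s, |g j a| ≤ K) :
    ∑ j ∈ s, |∫ a in c..d, g j a| ≤ K * (d - c) :=
  calc ∑ j ∈ s, |∫ a in c..d, g j a| ≤ ∑ j ∈ s, ∫ a in c..d, |g j a| :=
        Finset.sum_le_sum fun j _ => intervalIntegral.abs_integral_le_integral_abs hcd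
    _ = ∫ a in c..d, ∑ j ∈ s, |g j a| :=
        (intervalIntegral.integral_finsetSum fun j _ => (hg j).abs.intervalIntegrable _ _).symm
    _ ≤ ∫ _ in c..d, K :=
        intervalIntegral.integral_mono_on hcd
          ((continuous_finsetSum _ fun j _ => (hg j).abs).intervalIntegrable _ _)
          intervalIntegrable_const hK
    _ = K * (d - c) := by simp [mul_comm]

def DominatesVariationOn (M f : ℝ → ℝ) (s : Set ℝ) : Prop :=
  ∀ ⦃x⦄, x ∈ s → ∀ ⦃y⦄, y ∈ s → x ≤ y → |f y - f x| ≤ M y - M x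

namespace DominatesVariationOn

variable {M f : ℝ → ℝ}

lemma Icc_trans {a b c : ℝ} (h₁ : DominatesVariationOn M f (Icc a b))
    (h₂ : DominatesVariationOn M f (Icc b c)) : DominatesVariationOn M f (Icc a c) := by
  intro x hx y hy hxy
  rcases le_total y b with hyb | hby
  · exact h₁ ⟨hx.1, hxy.trans hyb⟩ ⟨hx.1.trans hxy, hyb⟩ hxy
  rcases le_total b x with hbx | hxb
  · exact h₂ ⟨hbx, hxy.trans hy.2⟩ ⟨hbx.trans hxy, hy.2⟩ hxy
  calc |f y - f x| ≤ |f y - f b| + |f b - f x| := abs_sub_le _ _ _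
    _ ≤ (M y - M b) + (M b - M x) :=
      add_le_add (h₂ ⟨le_rfl, hby.trans hy.2⟩ ⟨hby, hy.2⟩ hby)
        (h₁ ⟨hx.1, hxb⟩ ⟨hx.1.trans hxb, le_rfl⟩ hxb)
    _ = M y - M x := by ring

lemma sum_abs_sub_le {s : Set ℝ} (h : DominatesVariationOn M f s) {x : ℕ → ℝ} (hx : Monotone x)
    {n : ℕ} (hxs : ∀ j ≤ n, x j ∈ s) :
    ∑ j ∈ Finset.range n, |f (x (j + 1)) - f (x j)| ≤ M (x n) - M (x 0) := by
  rw [← Finset.sum_range_sub (fun j => M (x j))]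
  refine Finset.sum_le_sum fun j hj => ?_
  have hj := Finset.mem_range.1 hj
  exact h (hxs j hj.le) (hxs (j + 1) hj) (hx j.le_succ)

end DominatesVariationOn

section Eigenvector

variable {ι : Type*} [Fintype ι]

lemma norm_sum_ofReal_mul_le_s14 (b : ι → ℝ) (φ : ι → ℂ) :
    ‖∑ j, (b j : ℂ) * φ j‖ ≤ ∑ j, |b j| * ‖φ j‖ :=
  (norm_sum_le _ _).trans_eq
    (Finset.sum_congr rfl fun j _ => by rw [norm_mul, Complex.norm_real, norm_eq_abs])

lemma one_le_mul_sum_norm {φ : ι → ℂ} {M : ℝ} (hφ : ∑ i, ‖φ i‖ ^ 2 = 1)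
    (hM : ∀ i, ‖φ i‖ ≤ M) : 1 ≤ M * ∑ i, ‖φ i‖ := by
  rw [← hφ, Finset.mul_sum]
  exact Finset.sum_le_sum fun i _ => by
    rw [sq]; exact mul_le_mul_of_nonneg_right (hM i) (norm_nonneg _)

variable {B : Matrix ι ι ℝ} {lam : ℂ} {φ : ι → ℂ}

lemma mul_apply_eq_sum_of_mulVec_eq_smul (h : (B.map (fun x => (x : ℂ))).mulVec φ = lam • φ)
    (i : ι) : lam * φ i = ∑ j, (B i j : ℂ) * φ j := by
  simpa [Matrix.mulVec, dotProduct] using (congrFun h i).symm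

lemma norm_mul_norm_le_of_mulVec_eq_smul (h : (B.map (fun x => (x : ℂ))).mulVec φ = lam • φ)
    (hφ : ∑ i, ‖φ i‖ ^ 2 = 1) {i : ι} {r : ℝ} (hr : 0 ≤ r) (hB : ∑ j, B i j ^ 2 ≤ r ^ 2) :
    ‖lam‖ * ‖φ i‖ ≤ r := by
  rw [← norm_mul, mul_apply_eq_sum_of_mulVec_eq_smul h]
  calc _ ≤ ∑ j, |B i j| * ‖φ j‖ := norm_sum_ofReal_mul_le_s14 _ _
    _ ≤ √(∑ j, |B i j| ^ 2) * √(∑ j, ‖φ j‖ ^ 2) := sum_mul_le_sqrt_mul_sqrt _ _ _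
    _ ≤ r := by
      simp only [sq_abs, hφ, sqrt_one, mul_one]
      exact (sqrt_le_sqrt hB).trans_eq (sqrt_sq hr)

lemma norm_mul_norm_sub_le_of_mulVec_eq_smul (h : (B.map (fun x => (x : ℂ))).mulVec φ = lam • φ)
    {M : ℝ} (hM : ∀ j, ‖φ j‖ ≤ M) (i i' : ι) :
    ‖lam‖ * ‖φ i' - φ i‖ ≤ (∑ j, |B i' j - B i j|) * M := by
  rw [← norm_mul, mul_sub, mul_apply_eq_sum_of_mulVec_eq_smul h,
    mul_apply_eq_sum_of_mulVec_eq_smul h, ← Finset.sum_sub_distrib, Finset.sum_mul]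
  calc _ = ‖∑ j, ((B i' j - B i j : ℝ) : ℂ) * φ j‖ := by push_cast; simp_rw [sub_mul]
    _ ≤ ∑ j, |B i' j - B i j| * ‖φ j‖ := norm_sum_ofReal_mul_le_s14 _ _
    _ ≤ _ := by gcongr with j; exact hM j

end Eigenvector

namespace Gfun

variable {a a' t u y y' : ℝ}

/-- The second branch of `G_a` is `u ↦ S (e^{-a} (1 - u))`. -/
noncomputable def S (t : ℝ) : ℝ := exp t - exp 1 * t

noncomputable def T : ℝ → ℝ := Function.invFunOn S (Icc 0 1)

lemma hasDerivAt_S (t : ℝ) : HasDerivAt S (exp t - exp 1) t :=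
  ((hasDerivAt_exp t).sub ((hasDerivAt_id' t).const_mul (exp 1))).congr_deriv (by ring)

lemma continuous_S : Continuous S := by unfold S; fun_prop

lemma S_zero : S 0 = 1 := by simp [S]

lemma S_one : S 1 = 0 := by simp [S]

lemma strictAntiOn_S : StrictAntiOn S (Iic 1) := by
  refine strictAntiOn_of_deriv_neg (convex_Iic 1) continuous_S.continuousOn fun t ht => ?_
  rw [interior_Iic] at ht
  rw [(hasDerivAt_S t).deriv, sub_neg]
  exact exp_lt_exp.2 ht

lemma bijOn_S : BijOn S (Icc 0 1) (Icc 0 1) := by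
  refine ⟨fun t ht => ?_, strictAntiOn_S.injOn.mono Icc_subset_Iic_self, ?_⟩
  · have h₀ := strictAntiOn_S.antitoneOn (mem_Iic.2 zero_le_one) (Icc_subset_Iic_self ht) ht.1
    have h₁ := strictAntiOn_S.antitoneOn (Icc_subset_Iic_self ht) (mem_Iic.2 le_rfl) ht.2
    rw [S_zero] at h₀
    rw [S_one] at h₁
    exact ⟨h₁, h₀⟩
  · have h := intermediate_value_Icc' zero_le_one continuous_S.continuousOn (f := S)
    rwa [S_zero, S_one] at h

lemma T_mem (hy : y ∈ Icc (0 : ℝ) 1) : T y ∈ Icc (0 : ℝ) 1 :=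
  bijOn_S.surjOn.mapsTo_invFunOn hy

lemma S_T (hy : y ∈ Icc (0 : ℝ) 1) : S (T y) = y :=
  bijOn_S.invOn_invFunOn.2 hy

lemma T_S (ht : t ∈ Icc (0 : ℝ) 1) : T (S t) = t :=
  bijOn_S.invOn_invFunOn.1 ht

lemma T_one : T 1 = 0 := by simpa [S_zero] using T_S (t := 0) (by simp)

lemma antitoneOn_T : AntitoneOn T (Icc 0 1) := fun y hy y' hy' h => by
  rwa [← strictAntiOn_S.le_iff_ge (Icc_subset_Iic_self (T_mem hy))
    (Icc_subset_Iic_self (T_mem hy')), S_T hy, S_T hy']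

lemma S_le_sq (ht : t ∈ Icc (0 : ℝ) 1) : S t ≤ (exp 1 - exp t) ^ 2 := by
  let g t := (exp 1 - exp t) ^ 2 - S t
  have hg : ∀ t, HasDerivAt g ((exp 1 - exp t) * (1 - 2 * exp t)) t := fun t =>
    ((((hasDerivAt_exp t).const_sub (exp 1)).pow 2).sub (hasDerivAt_S t)).congr_deriv (by ring)
  have hanti : AntitoneOn g (Icc 0 1) := by
    refine antitoneOn_of_deriv_nonpos (convex_Icc 0 1)
      (fun t _ => (hg t).continuousAt.continuousWithinAt)
      (fun t _ => (hg t).differentiableAt.differentiableWithinAt) fun t ht => ?_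
    rw [interior_Icc] at ht
    rw [(hg t).deriv]
    exact mul_nonpos_of_nonneg_of_nonpos (by linarith [exp_le_exp.2 ht.2.le])
      (by linarith [one_le_exp ht.1.le])
  have h₁ : g 1 = 0 := by simp [g, S_one]
  have := hanti ht ⟨zero_le_one, le_rfl⟩ ht.2
  simp only [g] at this h₁ ⊢
  linarith

lemma antitoneOn_sqrt_S_add_half : AntitoneOn (fun t => √(S t) + t / 2) (Icc 0 1) := by
  have hpos : ∀ t ∈ Ioo (0 : ℝ) 1, 0 < S t := fun t ht => by
    simpa [S_one] using strictAntiOn_S (mem_Iic.2 ht.2.le) (mem_Iic.2 le_rfl) ht.2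
  have hd : ∀ t ∈ Ioo (0 : ℝ) 1,
      HasDerivAt (fun t => √(S t) + t / 2) ((exp t - exp 1) / (2 * √(S t)) + 1 / 2) t :=
    fun t ht => ((hasDerivAt_S t).sqrt (hpos t ht).ne').add
      (by simpa using (hasDerivAt_id t).div_const 2)
  refine antitoneOn_of_deriv_nonpos (convex_Icc 0 1)
    ((continuous_sqrt.comp continuous_S).add (continuous_id.div_const 2)).continuousOn
    (fun t ht => (hd t (by rwa [interior_Icc] at ht)).differentiableAt.differentiableWithinAt)
    fun t ht => ?_
  rw [interior_Icc] at ht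
  rw [(hd t ht).deriv]
  have hS := sqrt_le_sqrt (S_le_sq (Ioo_subset_Icc_self ht))
  rw [sqrt_sq (by linarith [exp_le_exp.2 ht.2.le])] at hS
  have hsq := sqrt_pos.2 (hpos t ht)
  rw [div_add' _ _ _ (by positivity), div_nonpos_iff]
  right
  constructor <;> nlinarith

lemma T_sub_T_le (hy : 0 ≤ y) (hyy' : y ≤ y') (hy' : y' ≤ 1) : T y - T y' ≤ 2 * (√y' - √y) := by
  have hmem : y ∈ Icc (0 : ℝ) 1 := ⟨hy, hyy'.trans hy'⟩
  have hmem' : y' ∈ Icc (0 : ℝ) 1 := ⟨hy.trans hyy', hy'⟩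
  have h := antitoneOn_sqrt_S_add_half (T_mem hmem') (T_mem hmem) (antitoneOn_T hmem hmem' hyy')
  simp only [S_T hmem, S_T hmem'] at h
  linarith

noncomputable def u₀ (a : ℝ) : ℝ := 1 - (1 - a) * exp a

/-- `β a = G_a (u₀ a)`, the value at which `G_a⁻¹` switches branches. -/
noncomputable def β (a : ℝ) : ℝ := S (1 - a)

/-- `G_a⁻¹` on `[0,1]`, written as a maximum so that it is visibly continuous in `a`. -/
noncomputable def ginvMax (a y : ℝ) : ℝ := max (exp (a - 1) * y) (1 - exp a * T y)

lemma exp_neg_mul_one_sub_u₀ (a : ℝ) : exp (-a) * (1 - u₀ a) = 1 - a := by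
  have : exp (-a) * exp a = 1 := by rw [← exp_add]; simp
  rw [u₀]
  linear_combination (1 - a) * this

lemma apply_of_le (h : u ≤ u₀ a) : Gfun a u = exp (1 - a) * u := if_pos h

lemma apply_of_ge (h : u₀ a ≤ u) : Gfun a u = S (exp (-a) * (1 - u)) := by
  have h₁ : exp 1 * exp (-a) = exp (1 - a) := by rw [← exp_add]; ring_nf
  have h₂ : exp (1 - a) * exp a = exp 1 := by rw [← exp_add]; ring_nf
  unfold Gfun S
  split_ifs with h'
  · obtain rfl : u = u₀ a := le_antisymm h' h
    rw [exp_neg_mul_one_sub_u₀, u₀]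
    linear_combination -(1 - a) * h₂
  · linear_combination (1 - u) * h₁

lemma strictMono (ha : 0 ≤ a) : StrictMono (Gfun a) := by
  refine StrictMonoOn.Iic_union_Ici (a := u₀ a) (fun u hu v hv huv => ?_)
    (fun u hu v hv huv => ?_)
  · rw [apply_of_le hu, apply_of_le hv]
    exact mul_lt_mul_of_pos_left huv (exp_pos _)
  · rw [apply_of_ge hu, apply_of_ge hv]
    have hle : exp (-a) * (1 - u) ≤ 1 := by
      have := mul_le_mul_of_nonneg_left (sub_le_sub_left (mem_Ici.1 hu) 1) (exp_pos (-a)).le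
      linarith [exp_neg_mul_one_sub_u₀ a]
    refine strictAntiOn_S ((mul_le_mul_of_nonneg_left (by linarith) (exp_pos _).le).trans hle) hle
      (mul_lt_mul_of_pos_left (by linarith) (exp_pos _))

/-- The branch is selected by the sign of `T y - (1 - a)`. -/
lemma ginvMax_left_sub_right (hy : y ∈ Icc (0 : ℝ) 1) :
    exp (a - 1) * y - (1 - exp a * T y) = exp (a - 1 + T y) - 1 := by
  have h₁ : exp (a - 1) * exp (T y) = exp (a - 1 + T y) := (exp_add _ _).symm
  have h₂ : exp (a - 1) * exp 1 = exp a := by rw [← exp_add]; ring_nf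
  have hS := S_T hy
  rw [S] at hS
  linear_combination h₁ - T y * h₂ - exp (a - 1) * hS

lemma ginvMax_eq_left (hy : y ∈ Icc (0 : ℝ) 1) (h : 1 - a ≤ T y) :
    ginvMax a y = exp (a - 1) * y := by
  have := ginvMax_left_sub_right (a := a) hy
  have := one_le_exp (x := a - 1 + T y) (by linarith)
  exact max_eq_left (by linarith)

lemma ginvMax_eq_right (hy : y ∈ Icc (0 : ℝ) 1) (h : T y ≤ 1 - a) :
    ginvMax a y = 1 - exp a * T y := by
  have := ginvMax_left_sub_right (a := a) hy
  have := exp_le_one_iff.2 (show a - 1 + T y ≤ 0 by linarith)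
  exact max_eq_right (by linarith)

lemma apply_ginvMax (ha : 0 ≤ a) (hy : y ∈ Icc (0 : ℝ) 1) :
    Gfun a (ginvMax a y) = y := by
  have h₁ : exp (1 - a) * exp (a - 1) = 1 := by rw [← exp_add]; simp
  rcases le_total (1 - a) (T y) with h | h
  · rw [ginvMax_eq_left hy h, apply_of_le, ← mul_assoc, h₁, one_mul]
    have hS : y ≤ S (1 - a) := by
      rw [← S_T hy]
      exact strictAntiOn_S.antitoneOn (mem_Iic.2 (by linarith)) (mem_Iic.2 (T_mem hy).2) h
    have hu : exp (a - 1) * S (1 - a) = u₀ a := by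
      have h₂ : exp (a - 1) * exp 1 = exp a := by rw [← exp_add]; ring_nf
      rw [S, u₀]
      linear_combination h₁ - (1 - a) * h₂
    exact hu ▸ mul_le_mul_of_nonneg_left hS (exp_pos _).le
  · rw [ginvMax_eq_right hy h, apply_of_ge]
    · rw [sub_sub_cancel, ← mul_assoc, ← exp_add, neg_add_cancel, exp_zero, one_mul, S_T hy]
    · rw [u₀]
      nlinarith [exp_pos a]

lemma _root_.Ginv_eq_ginvMax (ha : 0 ≤ a) (hy : y ∈ Icc (0 : ℝ) 1) :
    Ginv a y = ginvMax a y :=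
  calc Ginv a y = Ginv a (Gfun a (ginvMax a y)) := by rw [apply_ginvMax ha hy]
    _ = ginvMax a y := Function.leftInverse_invFun (strictMono ha).injective _

lemma ginvMax_le_ginvMax (hy : y ∈ Icc (0 : ℝ) 1) (hy' : y' ∈ Icc (0 : ℝ) 1) (h : y ≤ y') :
    ginvMax a y ≤ ginvMax a y' :=
  max_le_max (mul_le_mul_of_nonneg_left h (exp_pos _).le)
    (by nlinarith [antitoneOn_T hy hy' h, exp_pos a])

lemma ginvMax_sub_ginvMax_le (ha : a ≤ 1) (hy : 0 ≤ y) (h : y ≤ y') (hy' : y' ≤ 1) :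
    ginvMax a y' - ginvMax a y ≤ 6 * (√y' - √y) := by
  have hsqrt := sqrt_le_sqrt h
  have hsub : y' - y ≤ 2 * (√y' - √y) := by
    have h₂ : √y' + √y ≤ 2 := by linarith [sqrt_le_one.2 hy']
    nlinarith [sq_sqrt hy, sq_sqrt (hy.trans h),
      mul_le_mul_of_nonneg_left h₂ (sub_nonneg.2 hsqrt)]
  have hexp₁ : exp (a - 1) ≤ 1 := exp_le_one_iff.2 (by linarith)
  have hexp : exp a ≤ 3 := (exp_le_exp.2 ha).trans (by linarith [exp_one_lt_d9])
  have hT := T_sub_T_le hy h hy'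
  have hT₀ := antitoneOn_T ⟨hy, h.trans hy'⟩ ⟨hy.trans h, hy'⟩ h
  refine (max_sub_max_le_max _ _ _ _).trans (max_le ?_ ?_)
  · nlinarith [exp_pos (a - 1)]
  · nlinarith [exp_pos a]

lemma continuous_ginvMax_left (y : ℝ) : Continuous fun a => ginvMax a y := by
  unfold ginvMax; fun_prop

lemma β_mem (ha : a ∈ Icc (0 : ℝ) 1) : β a ∈ Icc (0 : ℝ) 1 :=
  bijOn_S.mapsTo ⟨by linarith [ha.2], by linarith [ha.1]⟩

lemma T_β (ha : a ∈ Icc (0 : ℝ) 1) : T (β a) = 1 - a :=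
  T_S ⟨by linarith [ha.2], by linarith [ha.1]⟩

lemma β_le_β (ha : 0 ≤ a) (h : a ≤ a') : β a ≤ β a' :=
  strictAntiOn_S.antitoneOn (mem_Iic.2 (by linarith)) (mem_Iic.2 (by linarith)) (by linarith)

lemma ginvMax_of_le_β (ha : a ∈ Icc (0 : ℝ) 1) (hy : 0 ≤ y) (h : y ≤ β a) :
    ginvMax a y = exp (a - 1) * y := by
  have hy' : y ∈ Icc (0 : ℝ) 1 := ⟨hy, h.trans (β_mem ha).2⟩
  exact ginvMax_eq_left hy' (T_β ha ▸ antitoneOn_T hy' (β_mem ha) h)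

lemma ginvMax_of_β_le (ha : a ∈ Icc (0 : ℝ) 1) (h : β a ≤ y) (hy : y ≤ 1) :
    ginvMax a y = 1 - exp a * T y := by
  have hy' : y ∈ Icc (0 : ℝ) 1 := ⟨(β_mem ha).1.trans h, hy⟩
  exact ginvMax_eq_right hy' (T_β ha ▸ antitoneOn_T (β_mem ha) hy' h)

/-- Clamping to `[β a, β a']` confines the terms of size `O(1)` to that interval of length
`O(a' - a)`. -/
noncomputable def majorant (a a' y : ℝ) : ℝ :=
  (exp (a' - 1) - exp (a - 1)) * y + exp (a' - 1) * min (max y (β a)) (β a')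
    - exp a * T (min (max y (β a)) (β a')) - (exp a' - exp a) * T (max y (β a'))

section Majorant

variable (ha : a ∈ Icc (0 : ℝ) 1) (ha' : a' ∈ Icc (0 : ℝ) 1) (haa' : a ≤ a')
include ha ha' haa'

lemma dominatesVariationOn_majorant_left :
    DominatesVariationOn (majorant a a') (fun y => ginvMax a' y - ginvMax a y) (Icc 0 (β a)) := by
  intro y hy y' hy' hyy'
  have hββ' := β_le_β ha.1 haa'
  simp only [majorant, ginvMax_of_le_β ha hy.1 hy.2, ginvMax_of_le_β ha hy'.1 hy'.2,
    ginvMax_of_le_β ha' hy.1 (hy.2.trans hββ'), ginvMax_of_le_β ha' hy'.1 (hy'.2.trans hββ'),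
    max_eq_right hy.2, max_eq_right hy'.2, min_eq_left hββ', max_eq_right (hy.2.trans hββ'),
    max_eq_right (hy'.2.trans hββ')]
  have := exp_le_exp.2 (show a - 1 ≤ a' - 1 by linarith)
  rw [abs_le]
  constructor <;> nlinarith

lemma dominatesVariationOn_majorant_mid :
    DominatesVariationOn (majorant a a') (fun y => ginvMax a' y - ginvMax a y)
      (Icc (β a) (β a')) := by
  intro y hy y' hy' hyy'
  have hβ := β_mem ha
  have hβ' := β_mem ha'
  simp only [majorant, ginvMax_of_β_le ha hy.1 (hy.2.trans hβ'.2),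
    ginvMax_of_β_le ha hy'.1 (hy'.2.trans hβ'.2), ginvMax_of_le_β ha' (hβ.1.trans hy.1) hy.2,
    ginvMax_of_le_β ha' (hβ.1.trans hy'.1) hy'.2, max_eq_left hy.1, max_eq_left hy'.1,
    min_eq_left hy.2, min_eq_left hy'.2, max_eq_right hy.2, max_eq_right hy'.2]
  have hT := antitoneOn_T ⟨hβ.1.trans hy.1, hy.2.trans hβ'.2⟩
    ⟨hβ.1.trans hy'.1, hy'.2.trans hβ'.2⟩ hyy'
  have := exp_le_exp.2 (show a - 1 ≤ a' - 1 by linarith)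
  have := exp_pos a
  have := exp_pos (a' - 1)
  rw [abs_le]
  constructor <;> nlinarith

lemma dominatesVariationOn_majorant_right :
    DominatesVariationOn (majorant a a') (fun y => ginvMax a' y - ginvMax a y) (Icc (β a') 1) := by
  intro y hy y' hy' hyy'
  have hββ' := β_le_β ha.1 haa'
  simp only [majorant, ginvMax_of_β_le ha (hββ'.trans hy.1) hy.2,
    ginvMax_of_β_le ha (hββ'.trans hy'.1) hy'.2, ginvMax_of_β_le ha' hy.1 hy.2,
    ginvMax_of_β_le ha' hy'.1 hy'.2, max_eq_left (hββ'.trans hy.1),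
    max_eq_left (hββ'.trans hy'.1), min_eq_right hy.1, min_eq_right hy'.1, max_eq_left hy.1,
    max_eq_left hy'.1]
  have hT := antitoneOn_T ⟨(β_mem ha').1.trans hy.1, hy.2⟩ ⟨(β_mem ha').1.trans hy'.1, hy'.2⟩ hyy'
  have := exp_le_exp.2 (show a - 1 ≤ a' - 1 by linarith)
  have := exp_le_exp.2 haa'
  rw [abs_le]
  constructor <;> nlinarith

lemma dominatesVariationOn_majorant :
    DominatesVariationOn (majorant a a') (fun y => ginvMax a' y - ginvMax a y) (Icc 0 1) :=
  ((dominatesVariationOn_majorant_left ha ha' haa').Icc_trans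
    (dominatesVariationOn_majorant_mid ha ha' haa')).Icc_trans
    (dominatesVariationOn_majorant_right ha ha' haa')

lemma majorant_one_sub_majorant_zero_le : majorant a a' 1 - majorant a a' 0 ≤ 10 * (a' - a) := by
  have hβ := β_mem ha
  have hβ' := β_mem ha'
  have hββ' := β_le_β ha.1 haa'
  simp only [majorant, max_eq_right hβ.1, min_eq_left hββ', max_eq_left hβ.2, min_eq_right hβ'.2,
    max_eq_right hβ'.1, max_eq_left hβ'.2, T_one, T_β ha, T_β ha']
  have he := exp_one_lt_d9
  have h₁ := exp_sub_exp_le_mul_sub (a - 1) (a' - 1)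
  have h₂ := exp_sub_exp_le_mul_sub a a'
  have hexp₁ : exp (a' - 1) ≤ 1 := exp_le_one_iff.2 (by linarith [ha'.2])
  have hexp : exp a' ≤ exp 1 := exp_le_exp.2 ha'.2
  have hexp' : exp a ≤ exp 1 := exp_le_exp.2 ha.2
  have hββ'_le : β a' - β a ≤ exp 1 * (a' - a) := by
    have := exp_le_exp.2 (show 1 - a' ≤ 1 - a by linarith)
    simp only [β, S]
    linarith
  have hd : 0 ≤ a' - a := by linarith
  nlinarith [mul_le_mul_of_nonneg_left hββ'_le (exp_pos (a' - 1)).le, exp_pos (a' - 1), exp_pos a,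
    mul_le_mul_of_nonneg_right hexp₁ hd, mul_le_mul_of_nonneg_right hexp' hd,
    mul_le_mul_of_nonneg_right hexp hd, ha'.1, ha'.2]

lemma sum_abs_sub_ginvMax_le (n : ℕ) :
    ∑ j ∈ Finset.range n, |(ginvMax a' (((j : ℝ) + 1) / n) - ginvMax a' ((j : ℝ) / n))
      - (ginvMax a (((j : ℝ) + 1) / n) - ginvMax a ((j : ℝ) / n))| ≤ 10 * (a' - a) := by
  rcases n.eq_zero_or_pos with rfl | hn
  · simp only [Finset.range_zero, Finset.sum_empty]
    linarith
  have h := (dominatesVariationOn_majorant ha ha' haa').sum_abs_sub_le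
    (x := fun j : ℕ => (j : ℝ) / n)
    (fun j k hjk => div_le_div_of_nonneg_right (by exact_mod_cast hjk) n.cast_nonneg) (n := n)
    fun j hj => natCast_div_mem_Icc hj
  have hn' : (n : ℝ) ≠ 0 := by positivity
  simp only [div_self hn', Nat.cast_zero, zero_div, Nat.cast_succ] at h
  refine le_trans (le_of_eq (Finset.sum_congr rfl fun j _ => ?_))
    (h.trans (majorant_one_sub_majorant_zero_le ha ha' haa'))
  ring_nf

end Majorant

end Gfun

open Gfun

section Bmat

variable {n : ℕ}

lemma Fin.val_div_mem_Icc (j : Fin n) :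
    (j.val : ℝ) / n ∈ Icc (0 : ℝ) 1 ∧ ((j.val : ℝ) + 1) / n ∈ Icc (0 : ℝ) 1 := by
  have h := natCast_div_mem_Icc j.isLt
  push_cast at h
  exact ⟨natCast_div_mem_Icc j.isLt.le, h⟩

lemma Fin.val_div_le_succ_div (j : Fin n) : (j.val : ℝ) / n ≤ ((j.val : ℝ) + 1) / n :=
  div_le_div_of_nonneg_right (by linarith) n.cast_nonneg

lemma Bmat_eq_integral (i j : Fin n) :
    Bmat n i j = n * ∫ a in (i.val : ℝ) / n..((i.val : ℝ) + 1) / n,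
      (ginvMax a (((j.val : ℝ) + 1) / n) - ginvMax a ((j.val : ℝ) / n)) := by
  refine congrArg _ (intervalIntegral.integral_congr fun a ha => ?_)
  rw [uIcc_of_le i.val_div_le_succ_div] at ha
  have ha₀ : 0 ≤ a := i.val_div_mem_Icc.1.1.trans ha.1
  simp only [Ginv_eq_ginvMax ha₀ j.val_div_mem_Icc.1, Ginv_eq_ginvMax ha₀ j.val_div_mem_Icc.2]

lemma Bmat_nonneg (i j : Fin n) : 0 ≤ Bmat n i j := by
  rw [Bmat_eq_integral]
  exact mul_nonneg n.cast_nonneg (intervalIntegral.integral_nonneg i.val_div_le_succ_div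
    fun a _ => sub_nonneg.2
      (ginvMax_le_ginvMax j.val_div_mem_Icc.1 j.val_div_mem_Icc.2 j.val_div_le_succ_div))

lemma Bmat_le (i j : Fin n) :
    Bmat n i j ≤ 6 * (√(((j.val : ℝ) + 1) / n) - √((j.val : ℝ) / n)) := by
  have hn : (0 : ℝ) < n := by exact_mod_cast i.pos
  have hint := intervalIntegral.norm_integral_le_of_norm_le_const
    (a := (i.val : ℝ) / n) (b := ((i.val : ℝ) + 1) / n)
    (f := fun a => ginvMax a (((j.val : ℝ) + 1) / n) - ginvMax a ((j.val : ℝ) / n))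
    (C := 6 * (√(((j.val : ℝ) + 1) / n) - √((j.val : ℝ) / n))) fun a ha => by
      rw [uIoc_of_le i.val_div_le_succ_div] at ha
      rw [norm_eq_abs, abs_of_nonneg (sub_nonneg.2
        (ginvMax_le_ginvMax j.val_div_mem_Icc.1 j.val_div_mem_Icc.2 j.val_div_le_succ_div))]
      exact ginvMax_sub_ginvMax_le (ha.2.trans i.val_div_mem_Icc.2.2) j.val_div_mem_Icc.1.1
        j.val_div_le_succ_div j.val_div_mem_Icc.2.2
  rw [← sub_div, add_sub_cancel_left, abs_of_pos (by positivity)] at hint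
  rw [Bmat_eq_integral]
  calc _ ≤ (n : ℝ) * (6 * (√(((j.val : ℝ) + 1) / n) - √((j.val : ℝ) / n)) * (1 / n)) :=
        mul_le_mul_of_nonneg_left ((le_abs_self _).trans hint) hn.le
    _ = _ := by field_simp

lemma Bmat_sq_le (i j : Fin n) : Bmat n i j ^ 2 ≤ 36 / (n * ((j.val : ℝ) + 1)) := by
  have hn : (0 : ℝ) < n := by exact_mod_cast i.pos
  have hsq := sq_sqrt_sub_sqrt_le j.val_div_mem_Icc.1.1 j.val_div_le_succ_div
  rw [← sub_div, add_sub_cancel_left] at hsq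
  calc Bmat n i j ^ 2 ≤ (6 * (√(((j.val : ℝ) + 1) / n) - √((j.val : ℝ) / n))) ^ 2 :=
        pow_le_pow_left₀ (Bmat_nonneg i j) (Bmat_le i j) 2
    _ ≤ 36 * ((1 / n) ^ 2 / (((j.val : ℝ) + 1) / n)) := by rw [mul_pow]; gcongr; norm_num
    _ = 36 / (n * ((j.val : ℝ) + 1)) := by field_simp

lemma Bmat_row_sq_sum_le (i : Fin n) :
    ∑ j, Bmat n i j ^ 2 ≤ (19 * (n : ℝ) ^ (-(4 : ℝ) / 9)) ^ 2 := by
  have hn : (0 : ℝ) < n := by exact_mod_cast i.pos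
  have hharm : ∑ j : Fin n, 1 / ((j.val : ℝ) + 1) = harmonic n := by
    rw [Fin.sum_univ_eq_sum_range (fun j => 1 / ((j : ℝ) + 1))]
    simp [harmonic]
  have hpow : (n : ℝ) ^ (1 / 9 : ℝ) / n = ((n : ℝ) ^ (-(4 : ℝ) / 9)) ^ 2 := by
    rw [← rpow_sub_one hn.ne', ← rpow_natCast, ← rpow_mul hn.le]
    norm_num
  calc ∑ j, Bmat n i j ^ 2 ≤ ∑ j : Fin n, 36 / n * (1 / ((j.val : ℝ) + 1)) :=
        Finset.sum_le_sum fun j _ => (Bmat_sq_le i j).trans_eq (by field_simp)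
    _ = 36 / n * harmonic n := by rw [← Finset.mul_sum, hharm]
    _ ≤ 36 / n * (10 * (n : ℝ) ^ (1 / 9 : ℝ)) := by gcongr; exact harmonic_le_rpow n
    _ = 360 * ((n : ℝ) ^ (-(4 : ℝ) / 9)) ^ 2 := by rw [← hpow]; ring
    _ ≤ (19 * (n : ℝ) ^ (-(4 : ℝ) / 9)) ^ 2 := by rw [mul_pow]; gcongr; norm_num

lemma Bmat_row_sub_sum_le (i : Fin n) (hi : i.val + 1 < n) :
    ∑ j, |Bmat n ⟨i.val + 1, hi⟩ j - Bmat n i j| ≤ 10 / n := by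
  have hn : (0 : ℝ) < n := by exact_mod_cast i.pos
  let g (j : Fin n) (a : ℝ) := ginvMax a (((j.val : ℝ) + 1) / n) - ginvMax a ((j.val : ℝ) / n)
  have hg : ∀ j, Continuous (g j) := fun j =>
    (continuous_ginvMax_left _).sub (continuous_ginvMax_left _)
  have hg' : ∀ j, Continuous fun a => g j (a + 1 / n) := fun j =>
    (hg j).comp (continuous_add_const _)
  have hshift : ∀ j, Bmat n ⟨i.val + 1, hi⟩ j - Bmat n i j =
      n * ∫ a in (i.val : ℝ) / n..((i.val : ℝ) + 1) / n, (g j (a + 1 / n) - g j a) := fun j => by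
    rw [Bmat_eq_integral, Bmat_eq_integral, intervalIntegral.integral_sub
      ((hg' j).intervalIntegrable _ _) ((hg j).intervalIntegrable _ _),
      intervalIntegral.integral_comp_add_right (g j), mul_sub]
    push_cast
    congr 3 <;> field_simp
  have hK : ∀ a ∈ Icc ((i.val : ℝ) / n) (((i.val : ℝ) + 1) / n),
      ∑ j, |g j (a + 1 / n) - g j a| ≤ 10 / n := fun a ha => by
    have hd : ((i.val : ℝ) + 1) / n + 1 / n ≤ 1 := by
      rw [← add_div, div_le_one hn]; exact_mod_cast hi
    have h := sum_abs_sub_ginvMax_le (a := a) (a' := a + 1 / n)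
      ⟨i.val_div_mem_Icc.1.1.trans ha.1, ha.2.trans i.val_div_mem_Icc.2.2⟩
      ⟨by linarith [i.val_div_mem_Icc.1.1, ha.1, one_div_pos.2 hn], by linarith [ha.2]⟩
      (by linarith [one_div_pos.2 hn]) n
    rw [← Fin.sum_univ_eq_sum_range] at h
    exact h.trans_eq (by ring)
  calc ∑ j, |Bmat n ⟨i.val + 1, hi⟩ j - Bmat n i j|
      = n * ∑ j, |∫ a in (i.val : ℝ) / n..((i.val : ℝ) + 1) / n, (g j (a + 1 / n) - g j a)| := by
        simp only [hshift, abs_mul, abs_of_pos hn, Finset.mul_sum]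
    _ ≤ n * (10 / n * (((i.val : ℝ) + 1) / n - (i.val : ℝ) / n)) := by
        gcongr
        exact sum_abs_integral_le _ (fun j => (hg' j).sub (hg j)) i.val_div_le_succ_div hK
    _ = 10 / n := by field_simp; ring

end Bmat

/-- There are constants `c₁, c₂, c₃ > 0`, independent of `n`, such that for every `n ≥ 2`,
every eigenvalue `λ` of `B(n)` with `|λ| > 0.08` and every corresponding eigenvector
`φ : Q_n → ℂ` with `‖φ‖₂ = 1`:  (i) `‖φ‖₁ ≥ c₁·n^{4/9}`;  (ii) `‖φ‖_∞ ≤ c₂·n^{-4/9}`;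
(iii) `|φ(i + 1/n) − φ(i)| ≤ c₃·n^{-13/9}` for every `i ∈ Q_n` with `i ≠ 1`. -/
theorem Bmat_eigenvector_bounds :
    ∃ c₁ c₂ c₃ : ℝ, 0 < c₁ ∧ 0 < c₂ ∧ 0 < c₃ ∧
      ∀ (n : ℕ), 2 ≤ n → ∀ (lam : ℂ) (φ : Fin n → ℂ),
        0.08 < ‖lam‖ →
        ((Bmat n).map (fun x => (x : ℂ))).mulVec φ = lam • φ →
        (∑ i : Fin n, ‖φ i‖ ^ 2) = 1 →
        (c₁ * (n : ℝ) ^ ((4 : ℝ) / 9) ≤ ∑ i : Fin n, ‖φ i‖) ∧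
        ((⨆ i : Fin n, ‖φ i‖) ≤ c₂ * (n : ℝ) ^ (-(4 : ℝ) / 9)) ∧
        (∀ (i : Fin n) (hi : (i : ℕ) + 1 < n),
          ‖φ ⟨(i : ℕ) + 1, hi⟩ - φ i‖ ≤ c₃ * (n : ℝ) ^ (-(13 : ℝ) / 9)) := by
  refine ⟨1 / 250, 250, 31250, by norm_num, by norm_num, by norm_num, ?_⟩
  intro n hn lam φ hlam hEig hφ
  have hn₀ : (0 : ℝ) < n := by positivity
  have hsup : ∀ i, ‖φ i‖ ≤ 250 * (n : ℝ) ^ (-(4 : ℝ) / 9) := fun i => by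
    have := norm_mul_norm_le_of_mulVec_eq_smul hEig hφ (by positivity) (Bmat_row_sq_sum_le i)
    nlinarith [norm_nonneg (φ i), rpow_pos_of_pos hn₀ (-(4 : ℝ) / 9)]
  refine ⟨?_, ?_, ?_⟩
  · have h := one_le_mul_sum_norm hφ hsup
    have hpow : (n : ℝ) ^ ((4 : ℝ) / 9) * (n : ℝ) ^ (-(4 : ℝ) / 9) = 1 := by
      rw [← rpow_add hn₀]; norm_num
    nlinarith [rpow_pos_of_pos hn₀ ((4 : ℝ) / 9)]
  · have : Nonempty (Fin n) := ⟨⟨0, by omega⟩⟩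
    exact ciSup_le hsup
  · intro i hi
    have h := (norm_mul_norm_sub_le_of_mulVec_eq_smul hEig hsup i ⟨i + 1, hi⟩).trans
      (mul_le_mul_of_nonneg_right (Bmat_row_sub_sum_le i hi) (by positivity))
    have hpow : 10 / n * (250 * (n : ℝ) ^ (-(4 : ℝ) / 9)) = 2500 * (n : ℝ) ^ (-(13 : ℝ) / 9) := by
      rw [show -(13 : ℝ) / 9 = -(4 : ℝ) / 9 - 1 by norm_num, rpow_sub_one hn₀.ne']; ring
    nlinarith [norm_nonneg (φ ⟨i + 1, hi⟩ - φ i), rpow_pos_of_pos hn₀ (-(13 : ℝ) / 9)]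
end

section
/- Let X be a random variable taking values in [0,1] and let μ := E[X]. Then e^{−μ} ≤ E[e^{−X}] ≤ e^{−μ}·(1 + Var(X)). -/
open MeasureTheory ProbabilityTheory

/-! The lower bound is Jensen's inequality for `exp`. For the upper bound write `X = m + t` with
`m = E[X]` and `t ≥ -1`; then `exp (-X) = exp (-m) exp (-t) ≤ exp (-m) (1 - t + t ^ 2)`, and
taking expectations kills the linear term and turns `t ^ 2` into the variance. -/

theorem Real.exp_neg_le_one_sub_add_sq {t : ℝ} (ht : -1 ≤ t) :
    Real.exp (-t) ≤ 1 - t + t ^ 2 := by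
  rcases le_or_gt t 1 with ht1 | ht1
  · have habs : |-t| ≤ 1 := by rw [abs_neg, abs_le]; constructor <;> linarith
    linarith [(abs_le.mp (Real.abs_exp_sub_one_sub_id_le habs)).2]
  · nlinarith [Real.exp_le_one_iff.mpr (by linarith : -t ≤ 0)]

section

variable {Ω : Type*} [MeasurableSpace Ω] {μ : Measure Ω} [IsProbabilityMeasure μ]
  {X : Ω → ℝ}

theorem exp_neg_integral_le_integral_exp_neg (hX : Integrable X μ)
    (hexp : Integrable (fun ω => Real.exp (-X ω)) μ) :
    Real.exp (-μ[X]) ≤ ∫ ω, Real.exp (-X ω) ∂μ := by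
  rw [← integral_neg]
  exact convexOn_exp.map_integral_le Real.continuous_exp.continuousOn isClosed_univ
    (.of_forall fun _ => trivial) hX.neg hexp

theorem integral_exp_neg_le_mul_one_add_variance (hX : MemLp X 2 μ)
    (hlow : ∀ᵐ ω ∂μ, μ[X] - 1 ≤ X ω) :
    ∫ ω, Real.exp (-X ω) ∂μ ≤ Real.exp (-μ[X]) * (1 + variance X μ) := by
  set m := μ[X]
  have hXi : Integrable X μ := hX.integrable one_le_two
  have hsq : Integrable (fun ω => (X ω - m) ^ 2) μ :=
    (hX.sub (memLp_const m)).integrable_sq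
  have hpoint :
      ∀ᵐ ω ∂μ, Real.exp (-X ω) ≤ Real.exp (-m) * (1 - (X ω - m) + (X ω - m) ^ 2) := by
    filter_upwards [hlow] with ω hω
    calc Real.exp (-X ω) = Real.exp (-m) * Real.exp (-(X ω - m)) := by
          rw [← Real.exp_add]; ring_nf
      _ ≤ _ := by gcongr; exact Real.exp_neg_le_one_sub_add_sq (by linarith)
  have hcentered : Integrable (fun ω => X ω - m) μ := hXi.sub (integrable_const m)
  have hcentered_mean : ∫ ω, (X ω - m) ∂μ = 0 := by
    rw [integral_sub hXi (integrable_const m)]; simp [m]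
  have hlin : Integrable (fun ω => 1 - (X ω - m)) μ := (integrable_const 1).sub hcentered
  calc ∫ ω, Real.exp (-X ω) ∂μ
      ≤ ∫ ω, Real.exp (-m) * (1 - (X ω - m) + (X ω - m) ^ 2) ∂μ :=
        integral_mono_of_nonneg (.of_forall fun _ => (Real.exp_pos _).le)
          ((hlin.add hsq).const_mul _) hpoint
    _ = Real.exp (-m) * (1 + variance X μ) := by
        rw [integral_const_mul, integral_add hlin hsq,
          integral_sub (integrable_const 1) hcentered, hcentered_mean,
          variance_eq_integral hX.aemeasurable]
        simp [m]

end

/-- If `X` is a random variable with values in `[0,1]` (a.s.) and `μ = E[X]`, then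
`e^{−μ} ≤ E[e^{−X}] ≤ e^{−μ}·(1 + Var(X))`. -/
theorem exp_neg_expectation_bounds {Ω : Type*} [MeasureSpace Ω]
    [IsProbabilityMeasure (ℙ : Measure Ω)] (X : Ω → ℝ)
    (hXm : AEStronglyMeasurable X ℙ) (hX01 : ∀ᵐ ω ∂(ℙ : Measure Ω), X ω ∈ Set.Icc (0 : ℝ) 1) :
    Real.exp (-(∫ ω, X ω)) ≤ ∫ ω, Real.exp (-(X ω)) ∧
      ∫ ω, Real.exp (-(X ω)) ≤ Real.exp (-(∫ ω, X ω)) * (1 + variance X ℙ) := by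
  have hX : MemLp X 2 ℙ := MemLp.of_bound hXm 1 <| by
    filter_upwards [hX01] with ω hω
    rw [Real.norm_eq_abs, abs_le]; constructor <;> linarith [hω.1, hω.2]
  have hexp : Integrable (fun ω => Real.exp (-X ω)) ℙ := by
    refine .of_bound
      ((Real.continuous_exp.comp continuous_neg).comp_aestronglyMeasurable hXm) 1 ?_
    filter_upwards [hX01] with ω hω
    rw [Real.norm_eq_abs, abs_of_pos (Real.exp_pos _), Real.exp_le_one_iff]
    linarith [hω.1]
  have hmean_le_one : ∫ ω, X ω ≤ 1 := by
    simpa using integral_mono_ae (hX.integrable one_le_two) (integrable_const 1)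
      (hX01.mono fun _ hω => hω.2)
  refine ⟨exp_neg_integral_le_integral_exp_neg (hX.integrable one_le_two) hexp,
    integral_exp_neg_le_mul_one_add_variance hX ?_⟩
  filter_upwards [hX01] with ω hω
  linarith [hω.1]
end
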